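/- arXiv:2008.00742 — 7 statements merged into one kernel-verified Lean document; each statement's English description precedes it below -/
import Mathlib

section
/- For any real r ≥ 1, every family of vectors x = (x_1, …, x_h) in ℝ^d (with d ≥ 1, h ≥ 1) satisfies Δ_r(x) ≤ Δ^{cw}_r(x) ≤ min {d^{1/r}, 2 h^{1/r}} · Δ_r(x). -/
open scoped BigOperators

/-- ℓ_r norm of a vector in ℝ^d: `‖v‖_r = (Σ_i |v i| ^ r) ^ (1/r)`. -/
noncomputable def rnorm (r : ℝ) {d : ℕ} (v : Fin d → ℝ) : ℝ :=
  (∑ i : Fin d, |v i| ^ r) ^ (1 / r)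

/-- ℓ_r-diameter of a family of vectors: `Δ_r(x) = max_{j,k} ‖x j - x k‖_r`. -/
noncomputable def diamr (r : ℝ) {d h : ℕ} (x : Fin h → Fin d → ℝ) : ℝ :=
  ⨆ j : Fin h, ⨆ k : Fin h, rnorm r (x j - x k)

/-- Diameter along coordinate `i`: `Δ^{cw}(x)[i] = max_{j,k} |x j i - x k i|`. -/
noncomputable def diamcw {d h : ℕ} (x : Fin h → Fin d → ℝ) (i : Fin d) : ℝ :=
  ⨆ j : Fin h, ⨆ k : Fin h, |x j i - x k i|

/-- Coordinate-wise ℓ_r-diameter: `Δ^{cw}_r(x) = (Σ_i Δ^{cw}(x)[i] ^ r) ^ (1/r)`. -/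
noncomputable def diamcwr (r : ℝ) {d h : ℕ} (x : Fin h → Fin d → ℝ) : ℝ :=
  (∑ i : Fin d, diamcw x i ^ r) ^ (1 / r)

theorem stmt_3 {d h : ℕ} (hd : 1 ≤ d) (hh : 1 ≤ h) (r : ℝ) (hr : 1 ≤ r)
    (x : Fin h → Fin d → ℝ) :
    diamr r x ≤ diamcwr r x ∧
      diamcwr r x ≤ min ((d : ℝ) ^ (1 / r)) (2 * (h : ℝ) ^ (1 / r)) * diamr r x := by
  have hr0 : 0 < r := lt_of_lt_of_le one_pos hr
  have hrne : r ≠ 0 := ne_of_gt hr0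
  have hinv : 0 ≤ 1 / r := by positivity
  haveI : Nonempty (Fin h) := ⟨⟨0, hh⟩⟩
  have lesup : ∀ (f : Fin h → ℝ) (j : Fin h), f j ≤ ⨆ k, f k :=
    fun f j => le_ciSup (Set.finite_range f).bddAbove j
  have rnorm_nonneg : ∀ (v : Fin d → ℝ), 0 ≤ rnorm r v := by
    intro v; unfold rnorm; positivity
  have rnorm_pow : ∀ (v : Fin d → ℝ), rnorm r v ^ r = ∑ i : Fin d, |v i| ^ r := by
    intro v
    unfold rnorm
    rw [← Real.rpow_mul (by positivity), one_div_mul_cancel hrne, Real.rpow_one]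
  -- diamr nonneg
  have diamr_nonneg : 0 ≤ diamr r x := by
    have j0 : Fin h := Classical.arbitrary _
    calc (0:ℝ) ≤ rnorm r (x j0 - x j0) := rnorm_nonneg _
    _ ≤ ⨆ k, rnorm r (x j0 - x k) := lesup (fun k => rnorm r (x j0 - x k)) j0
    _ ≤ diamr r x := lesup (fun j => ⨆ k, rnorm r (x j - x k)) j0
  -- each pair bound by diamr
  have pair_le : ∀ j k, rnorm r (x j - x k) ≤ diamr r x := by
    intro j k
    calc rnorm r (x j - x k) ≤ ⨆ k, rnorm r (x j - x k) := lesup (fun k => rnorm r (x j - x k)) k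
    _ ≤ diamr r x := lesup (fun j => ⨆ k, rnorm r (x j - x k)) j
  have cw_le : ∀ i j k, |x j i - x k i| ≤ diamcw x i := by
    intro i j k
    calc |x j i - x k i| ≤ ⨆ k, |x j i - x k i| := lesup (fun k => |x j i - x k i|) k
    _ ≤ diamcw x i := lesup (fun j => ⨆ k, |x j i - x k i|) j
  have cw_nonneg : ∀ i, 0 ≤ diamcw x i := fun i =>
    le_trans (abs_nonneg _) (cw_le i (Classical.arbitrary _) (Classical.arbitrary _))
  -- Part 1 : diamr ≤ diamcwr
  have part1 : diamr r x ≤ diamcwr r x := by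
    apply ciSup_le; intro j; apply ciSup_le; intro k
    unfold rnorm diamcwr
    apply Real.rpow_le_rpow (by positivity) _ hinv
    apply Finset.sum_le_sum
    intro i _
    exact Real.rpow_le_rpow (abs_nonneg _) (cw_le i j k) (le_of_lt hr0)
  -- coordinate bound: diamcw x i ≤ diamr
  have cw_le_diamr : ∀ i, diamcw x i ≤ diamr r x := by
    intro i
    apply ciSup_le; intro j; apply ciSup_le; intro k
    have h1 : |x j i - x k i| ^ r ≤ rnorm r (x j - x k) ^ r := by
      rw [rnorm_pow]
      have : |(x j - x k) i| ^ r = |x j i - x k i| ^ r := by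
        simp [Pi.sub_apply]
      calc |x j i - x k i| ^ r = |(x j - x k) i| ^ r := this.symm
      _ ≤ ∑ i' : Fin d, |(x j - x k) i'| ^ r := by
          apply Finset.single_le_sum (fun i' _ => Real.rpow_nonneg (abs_nonneg _) r)
            (Finset.mem_univ i)
    have h2 : |x j i - x k i| ≤ rnorm r (x j - x k) := by
      have := Real.rpow_le_rpow (Real.rpow_nonneg (abs_nonneg _) r) h1 hinv
      rwa [← Real.rpow_mul (abs_nonneg _), ← Real.rpow_mul (rnorm_nonneg _),
        mul_one_div_cancel hrne, Real.rpow_one, Real.rpow_one] at this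
    exact h2.trans (pair_le j k)
  -- Bound 1 : diamcwr ≤ d^{1/r} * diamr
  have bound1 : diamcwr r x ≤ (d : ℝ) ^ (1 / r) * diamr r x := by
    unfold diamcwr
    have hsum : ∑ i : Fin d, diamcw x i ^ r ≤ (d : ℝ) * diamr r x ^ r := by
      calc ∑ i : Fin d, diamcw x i ^ r ≤ ∑ _i : Fin d, diamr r x ^ r :=
        Finset.sum_le_sum fun i _ =>
          Real.rpow_le_rpow (cw_nonneg i) (cw_le_diamr i) (le_of_lt hr0)
      _ = (d : ℝ) * diamr r x ^ r := by simp [mul_comm]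
    calc (∑ i : Fin d, diamcw x i ^ r) ^ (1/r)
        ≤ ((d : ℝ) * diamr r x ^ r) ^ (1/r) :=
          Real.rpow_le_rpow (Finset.sum_nonneg fun i _ => Real.rpow_nonneg (cw_nonneg i) r)
            hsum hinv
      _ = (d : ℝ) ^ (1/r) * diamr r x := by
          rw [Real.mul_rpow (by positivity) (by positivity),
            ← Real.rpow_mul diamr_nonneg, mul_one_div_cancel hrne, Real.rpow_one]
  -- Bound 2 : diamcwr ≤ 2 h^{1/r} * diamr
  have bound2 : diamcwr r x ≤ 2 * (h : ℝ) ^ (1 / r) * diamr r x := by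
    set j0 : Fin h := Classical.arbitrary _ with hj0
    set m : Fin d → ℝ := fun i => ⨆ j, |x j i - x j0 i| with hm
    have m_nonneg : ∀ i, 0 ≤ m i := fun i =>
      le_trans (abs_nonneg _)
        (lesup (fun j => |x j i - x j0 i|) (Classical.arbitrary _))
    have cw_le_2m : ∀ i, diamcw x i ≤ 2 * m i := by
      intro i
      apply ciSup_le; intro j; apply ciSup_le; intro k
      calc |x j i - x k i| ≤ |x j i - x j0 i| + |x k i - x j0 i| := by
            have : x j i - x k i = (x j i - x j0 i) - (x k i - x j0 i) := by ring
            rw [this]; exact abs_sub _ _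
        _ ≤ m i + m i := add_le_add (lesup (fun j => |x j i - x j0 i|) j) (lesup (fun k => |x k i - x j0 i|) k)
        _ = 2 * m i := by ring
    have m_pow_le : ∀ i, m i ^ r ≤ ∑ j : Fin h, |x j i - x j0 i| ^ r := by
      intro i
      obtain ⟨j, hj⟩ := Finite.exists_max (fun j => |x j i - x j0 i|)
      have hmle : m i ≤ |x j i - x j0 i| := ciSup_le hj
      calc m i ^ r ≤ |x j i - x j0 i| ^ r :=
          Real.rpow_le_rpow (m_nonneg i) hmle (le_of_lt hr0)
        _ ≤ ∑ j : Fin h, |x j i - x j0 i| ^ r :=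
          Finset.single_le_sum (f := fun j' => |x j' i - x j0 i| ^ r)
            (fun j' _ => Real.rpow_nonneg (abs_nonneg _) r) (Finset.mem_univ j)
    have hsum : ∑ i : Fin d, diamcw x i ^ r
        ≤ (2:ℝ) ^ r * (h : ℝ) * diamr r x ^ r := by
      calc ∑ i : Fin d, diamcw x i ^ r
          ≤ ∑ i : Fin d, (2:ℝ) ^ r * m i ^ r := by
            apply Finset.sum_le_sum; intro i _
            calc diamcw x i ^ r ≤ (2 * m i) ^ r :=
                Real.rpow_le_rpow (cw_nonneg i) (cw_le_2m i) (le_of_lt hr0)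
              _ = (2:ℝ) ^ r * m i ^ r :=
                Real.mul_rpow (by norm_num) (m_nonneg i)
        _ ≤ ∑ i : Fin d, (2:ℝ) ^ r * ∑ j : Fin h, |x j i - x j0 i| ^ r := by
            apply Finset.sum_le_sum; intro i _
            exact mul_le_mul_of_nonneg_left (m_pow_le i) (by positivity)
        _ = (2:ℝ) ^ r * ∑ j : Fin h, ∑ i : Fin d, |x j i - x j0 i| ^ r := by
            rw [← Finset.mul_sum, Finset.sum_comm]
        _ ≤ (2:ℝ) ^ r * ∑ _j : Fin h, diamr r x ^ r := by
            apply mul_le_mul_of_nonneg_left _ (by positivity)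
            apply Finset.sum_le_sum; intro j _
            have e : ∑ i : Fin d, |x j i - x j0 i| ^ r = rnorm r (x j - x j0) ^ r := by
              rw [rnorm_pow]; simp [Pi.sub_apply]
            rw [e]
            exact Real.rpow_le_rpow (rnorm_nonneg _) (pair_le j j0) (le_of_lt hr0)
        _ = (2:ℝ) ^ r * (h : ℝ) * diamr r x ^ r := by
            simp [Finset.sum_const, mul_comm, mul_assoc, mul_left_comm]
    unfold diamcwr
    calc (∑ i : Fin d, diamcw x i ^ r) ^ (1/r)
        ≤ ((2:ℝ) ^ r * (h : ℝ) * diamr r x ^ r) ^ (1/r) :=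
          Real.rpow_le_rpow (Finset.sum_nonneg fun i _ => Real.rpow_nonneg (cw_nonneg i) r)
            hsum hinv
      _ = 2 * (h : ℝ) ^ (1/r) * diamr r x := by
          rw [Real.mul_rpow (by positivity) (by positivity),
            Real.mul_rpow (by positivity) (by positivity),
            ← Real.rpow_mul (by norm_num : (0:ℝ) ≤ 2),
            ← Real.rpow_mul diamr_nonneg, mul_one_div_cancel hrne,
            Real.rpow_one, Real.rpow_one]
  refine ⟨part1, ?_⟩
  rw [min_mul_of_nonneg _ _ diamr_nonneg]
  exact le_min bound1 bound2
end

section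
/- Let c ≥ 0 and let (u_t)_{t ≥ 1} be a sequence of nonnegative reals such that u_{t+1} ≤ (3/4) u_t + c/t² for all t ≥ 1. Then there exists a constant D ≥ 0 such that u_t ≤ D/t² for all t ≥ 1. -/
theorem stmt_10 (c : ℝ) (hc : 0 ≤ c) (u : ℕ → ℝ) (hu : ∀ t, 1 ≤ t → 0 ≤ u t)
    (hrec : ∀ t, 1 ≤ t → u (t + 1) ≤ (3 / 4) * u t + c / (t : ℝ) ^ 2) :
    ∃ D : ℝ, 0 ≤ D ∧ ∀ t, 1 ≤ t → u t ≤ D / (t : ℝ) ^ 2 := by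
  set D : ℝ := 64 * c + ∑ t ∈ Finset.Icc 1 7, u t * (t : ℝ) ^ 2 with hD
  have hterm : ∀ t ∈ Finset.Icc 1 7, 0 ≤ u t * (t : ℝ) ^ 2 := by
    intro t ht
    simp only [Finset.mem_Icc] at ht
    exact mul_nonneg (hu t ht.1) (by positivity)
  have hsum : 0 ≤ ∑ t ∈ Finset.Icc 1 7, u t * (t : ℝ) ^ 2 := Finset.sum_nonneg hterm
  have hD0 : 0 ≤ D := by nlinarith
  have hcD : 64 * c ≤ D := by nlinarith
  have hsmall : ∀ t, 1 ≤ t → t ≤ 7 → u t ≤ D / (t : ℝ) ^ 2 := by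
    intro t h1 h7
    have ht : (0 : ℝ) < (t : ℝ) ^ 2 := by positivity
    rw [le_div_iff₀ ht]
    have hmem : t ∈ Finset.Icc 1 7 := Finset.mem_Icc.mpr ⟨h1, h7⟩
    have := Finset.single_le_sum hterm hmem
    nlinarith
  have hbig : ∀ t, 7 ≤ t → u t ≤ D / (t : ℝ) ^ 2 := by
    intro t ht
    induction t, ht using Nat.le_induction with
    | base => exact hsmall 7 (by norm_num) le_rfl
    | succ n hn ih =>
      have h1 : 1 ≤ n := le_trans (by norm_num) hn
      have hn7 : (7 : ℝ) ≤ (n : ℝ) := by exact_mod_cast hn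
      have hnpos : (0 : ℝ) < (n : ℝ) ^ 2 := by positivity
      have key : ((3 / 4) * D + c) / (n : ℝ) ^ 2 ≤ D / ((n : ℝ) + 1) ^ 2 := by
        rw [div_le_div_iff₀ hnpos (by positivity)]
        nlinarith [mul_nonneg (mul_nonneg (sub_nonneg.2 hn7)
            (show (0 : ℝ) ≤ 15 * (n : ℝ) + 7 by nlinarith))
            (show (0 : ℝ) ≤ (3 / 4) * D + c by nlinarith),
          mul_nonneg (sub_nonneg.2 hcD) hnpos.le]
      have step : u (n + 1) ≤ ((3 / 4) * D + c) / (n : ℝ) ^ 2 := by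
        have := hrec n h1
        rw [add_div]
        have h34 : (3 / 4) * u n ≤ (3 / 4) * (D / (n : ℝ) ^ 2) := by nlinarith
        rw [mul_div_assoc]
        linarith
      have : u (n + 1) ≤ D / ((n : ℝ) + 1) ^ 2 := le_trans step key
      convert this using 3
      push_cast
      ring
  refine ⟨D, hD0, fun t h1 => ?_⟩
  rcases le_or_gt t 7 with h | h
  · exact hsmall t h1 h
  · exact hbig t h.le
end

section
/- Let f : ℝ^d → ℝ be differentiable with L-Lipschitz gradient (L > 0), let η > 0, and let θ, g ∈ ℝ^d. Then f(θ − η g) ≤ f(θ) − (η/2 − L η²) ‖∇f(θ)‖₂² + (η/2 + L η²) ‖g − ∇f(θ)‖₂². -/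
/-!
The descent lemma `f (x + v) ≤ f x + ⟪∇f x, v⟫ + L/2 ‖v‖²` holds because
`t ↦ f (x + t v) - t ⟪∇f x, v⟫ - t² L‖v‖²/2` has derivative
`⟪∇f (x + t v) - ∇f x, v⟫ - t L‖v‖² ≤ 0` on `[0, 1]`. At `v = -η g`, writing `e = g - ∇f θ`,
polarization gives `-η⟪∇f θ, g⟫ = η/2 (‖e‖² - ‖∇f θ‖² - ‖g‖²)`, and `‖g‖² ≤ 2‖∇f θ‖² + 2‖e‖²`
bounds the quadratic term; dropping `-η/2 ‖g‖²` leaves the claim.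
-/

open scoped RealInnerProductSpace

variable {E : Type*} [NormedAddCommGroup E] [InnerProductSpace ℝ E] [CompleteSpace E]
  {f : E → ℝ}

theorem HasGradientAt.hasDerivAt_comp_add_smul {f' x v : E} {t : ℝ}
    (h : HasGradientAt f f' (x + t • v)) :
    HasDerivAt (fun s : ℝ => f (x + s • v)) ⟪f', v⟫ t := by
  have hline : HasDerivAt (fun s : ℝ => x + s • v) v t := by
    simpa using ((hasDerivAt_id t).smul_const v).const_add x
  simpa [Function.comp_def] using h.hasFDerivAt.comp_hasDerivAt t hline

theorem image_add_le_of_lipschitz_gradient {L : ℝ} (hf : Differentiable ℝ f)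
    (hlip : ∀ u w : E, ‖gradient f u - gradient f w‖ ≤ L * ‖u - w‖) (x v : E) :
    f (x + v) ≤ f x + ⟪gradient f x, v⟫ + L / 2 * ‖v‖ ^ 2 := by
  set φ : ℝ → ℝ := fun t => f (x + t • v) - t * ⟪gradient f x, v⟫ - t ^ 2 * (L / 2 * ‖v‖ ^ 2)
  have hφ : ∀ t, HasDerivAt φ
      (⟪gradient f (x + t • v) - gradient f x, v⟫ - t * (L * ‖v‖ ^ 2)) t := by
    intro t
    have := (((hf (x + t • v)).hasGradientAt.hasDerivAt_comp_add_smul).sub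
      ((hasDerivAt_id t).mul_const ⟪gradient f x, v⟫)).sub
      ((hasDerivAt_pow 2 t).mul_const (L / 2 * ‖v‖ ^ 2))
    exact this.congr_deriv (by rw [inner_sub_left]; ring)
  have hφ' : ∀ t ∈ interior (Set.Icc (0 : ℝ) 1),
      ⟪gradient f (x + t • v) - gradient f x, v⟫ - t * (L * ‖v‖ ^ 2) ≤ 0 := by
    intro t ht
    rw [interior_Icc] at ht
    rw [sub_nonpos]
    have hgrad : ‖gradient f (x + t • v) - gradient f x‖ ≤ L * (t * ‖v‖) := by
      simpa [norm_smul, abs_of_pos ht.1] using hlip (x + t • v) x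
    calc ⟪gradient f (x + t • v) - gradient f x, v⟫
        ≤ ‖gradient f (x + t • v) - gradient f x‖ * ‖v‖ := real_inner_le_norm _ _
      _ ≤ L * (t * ‖v‖) * ‖v‖ := by gcongr
      _ = t * (L * ‖v‖ ^ 2) := by ring
  have hanti : AntitoneOn φ (Set.Icc 0 1) :=
    antitoneOn_of_hasDerivWithinAt_nonpos (convex_Icc 0 1)
      (fun t _ => (hφ t).continuousAt.continuousWithinAt)
      (fun t _ => (hφ t).hasDerivWithinAt) hφ'
  have h01 : φ 1 ≤ φ 0 := hanti (by simp) (by simp) zero_le_one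
  simp only [φ, one_smul, zero_smul, add_zero, one_pow, one_mul, zero_mul, sub_zero,
    zero_pow two_ne_zero] at h01
  linarith

theorem stmt_14 {d : ℕ} (f : EuclideanSpace ℝ (Fin d) → ℝ) (L η : ℝ)
    (hL : 0 < L) (hdiff : Differentiable ℝ f)
    (hlip : ∀ u v : EuclideanSpace ℝ (Fin d),
      ‖gradient f u - gradient f v‖ ≤ L * ‖u - v‖)
    (hη0 : 0 < η) (θ g : EuclideanSpace ℝ (Fin d)) :
    f (θ - η • g) ≤
      f θ - (η / 2 - L * η ^ 2) * ‖gradient f θ‖ ^ 2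
        + (η / 2 + L * η ^ 2) * ‖g - gradient f θ‖ ^ 2 := by
  have hdescent := image_add_le_of_lipschitz_gradient hdiff hlip θ (-(η • g))
  rw [← sub_eq_add_neg, inner_neg_right, real_inner_smul_right, norm_neg, norm_smul,
    Real.norm_eq_abs, abs_of_pos hη0] at hdescent
  set a := gradient f θ
  have hpolar : ‖g - a‖ ^ 2 = ‖g‖ ^ 2 - 2 * ⟪a, g⟫ + ‖a‖ ^ 2 := by
    rw [norm_sub_sq_real, real_inner_comm]
  have hnorm_sq_le : ‖g‖ ^ 2 ≤ 2 * (‖a‖ ^ 2 + ‖g - a‖ ^ 2) :=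
    calc ‖g‖ ^ 2 = ‖a + (g - a)‖ ^ 2 := by rw [add_sub_cancel]
      _ ≤ (‖a‖ + ‖g - a‖) ^ 2 := by gcongr; exact norm_add_le _ _
      _ ≤ 2 * (‖a‖ ^ 2 + ‖g - a‖ ^ 2) := add_sq_le
  have hLη : 0 ≤ L * η ^ 2 / 2 := by positivity
  have hg : 0 ≤ η / 2 * ‖g‖ ^ 2 := by positivity
  linear_combination hdescent - η / 2 * hpolar + mul_le_mul_of_nonneg_left hnorm_sq_le hLη + hg
end

section
/- Let ι be a finite type, w : ι → ℝ, and let S₁, S₂ be nonempty finite subsets of ι with S₁ ∩ S₂ nonempty. Suppose there are reals a ≤ b with a ≤ w(l) ≤ b for every l ∈ S₁ ∪ S₂, and a real λ ∈ [0, 1] with |S₁ \ S₂| ≤ λ |S₁| and |S₂ \ S₁| ≤ λ |S₂|. Then the averages m₁ = (1/|S₁|) Σ_{l ∈ S₁} w(l) and m₂ = (1/|S₂|) Σ_{l ∈ S₂} w(l) satisfy |m₁ − m₂| ≤ λ (b − a). -/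
private lemma key_upper (P Q k d n lam b : ℝ) (hk : 0 < k) (hn : 0 < n)
    (hnd : n = k + d) (hd : 0 ≤ d) (hQ : Q ≤ d * b) (hP : P ≤ k * b)
    (hdl : d ≤ lam * n) :
    (P + Q) / n - P / k ≤ lam * (b - P / k) := by
  subst hnd
  rw [← sub_nonneg]
  have e : lam * (b - P / k) - ((P + Q) / (k + d) - P / k) =
      (lam * (k + d) * (k * b - P) - (k * Q - d * P)) / ((k + d) * k) := by
    field_simp
    ring
  rw [e]
  apply div_nonneg _ (by positivity)
  nlinarith [mul_nonneg (sub_nonneg.mpr hdl) (sub_nonneg.mpr hP),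
    mul_nonneg hk.le (sub_nonneg.mpr hQ)]

private lemma key_lower (P Q k d n lam a : ℝ) (hk : 0 < k) (hn : 0 < n)
    (hnd : n = k + d) (hd : 0 ≤ d) (hQ : d * a ≤ Q) (hP : k * a ≤ P)
    (hdl : d ≤ lam * n) :
    P / k - (P + Q) / n ≤ lam * (P / k - a) := by
  have h := key_upper (-P) (-Q) k d n lam (-a) hk hn hnd hd (by linarith) (by linarith) hdl
  have e1 : (-P + -Q) / n = -((P + Q) / n) := by ring
  have e2 : (-P) / k = -(P / k) := by ring
  rw [e1, e2] at h
  linarith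

theorem stmt_16 {ι : Type*} [Fintype ι] [DecidableEq ι] (w : ι → ℝ)
    (S₁ S₂ : Finset ι) (h1 : S₁.Nonempty) (h2 : S₂.Nonempty)
    (hinter : (S₁ ∩ S₂).Nonempty)
    (a b : ℝ) (hab : a ≤ b) (hw : ∀ l ∈ S₁ ∪ S₂, a ≤ w l ∧ w l ≤ b)
    (lam : ℝ) (hlam0 : 0 ≤ lam) (hlam1 : lam ≤ 1)
    (hc1 : ((S₁ \ S₂).card : ℝ) ≤ lam * S₁.card)
    (hc2 : ((S₂ \ S₁).card : ℝ) ≤ lam * S₂.card) :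
    |(S₁.card : ℝ)⁻¹ * ∑ l ∈ S₁, w l - (S₂.card : ℝ)⁻¹ * ∑ l ∈ S₂, w l| ≤
      lam * (b - a) := by
  set k : ℝ := ((S₁ ∩ S₂).card : ℝ) with hkdef
  set P : ℝ := ∑ l ∈ S₁ ∩ S₂, w l with hPdef
  have hk : 0 < k := by
    rw [hkdef]; exact_mod_cast Finset.card_pos.mpr hinter
  have hn1 : (0:ℝ) < S₁.card := by exact_mod_cast Finset.card_pos.mpr h1
  have hn2 : (0:ℝ) < S₂.card := by exact_mod_cast Finset.card_pos.mpr h2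
  -- cardinality splits
  have hsplit1 : (S₁.card : ℝ) = k + ((S₁ \ S₂).card : ℝ) := by
    rw [hkdef]
    have := Finset.card_inter_add_card_sdiff S₁ S₂
    exact_mod_cast (this.symm)
  have hsplit2 : (S₂.card : ℝ) = k + ((S₂ \ S₁).card : ℝ) := by
    rw [hkdef, Finset.inter_comm]
    have := Finset.card_inter_add_card_sdiff S₂ S₁
    exact_mod_cast (this.symm)
  -- sum splits
  have hsum1 : ∑ l ∈ S₁, w l = P + ∑ l ∈ S₁ \ S₂, w l := by
    rw [hPdef, Finset.sum_inter_add_sum_sdiff]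
  have hsum2 : ∑ l ∈ S₂, w l = P + ∑ l ∈ S₂ \ S₁, w l := by
    rw [hPdef, Finset.inter_comm, Finset.sum_inter_add_sum_sdiff]
  -- pointwise bounds
  have hbound : ∀ (T : Finset ι), T ⊆ S₁ ∪ S₂ →
      (T.card : ℝ) * a ≤ ∑ l ∈ T, w l ∧ ∑ l ∈ T, w l ≤ (T.card : ℝ) * b := by
    intro T hT
    constructor
    · calc (T.card : ℝ) * a = ∑ _l ∈ T, a := by rw [Finset.sum_const, nsmul_eq_mul]
        _ ≤ ∑ l ∈ T, w l := Finset.sum_le_sum fun l hl => (hw l (hT hl)).1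
    · calc ∑ l ∈ T, w l ≤ ∑ _l ∈ T, b := Finset.sum_le_sum fun l hl => (hw l (hT hl)).2
        _ = (T.card : ℝ) * b := by rw [Finset.sum_const, nsmul_eq_mul]
  have hPb := hbound (S₁ ∩ S₂) (Finset.inter_subset_union)
  have hQ1 := hbound (S₁ \ S₂) ((Finset.sdiff_subset).trans Finset.subset_union_left)
  have hQ2 := hbound (S₂ \ S₁) ((Finset.sdiff_subset).trans Finset.subset_union_right)
  have hd1 : (0:ℝ) ≤ ((S₁ \ S₂).card : ℝ) := Nat.cast_nonneg _
  have hd2 : (0:ℝ) ≤ ((S₂ \ S₁).card : ℝ) := Nat.cast_nonneg _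
  -- four inequalities
  have u1 := key_upper P (∑ l ∈ S₁ \ S₂, w l) k _ _ lam b hk hn1 hsplit1 hd1 hQ1.2 hPb.2 hc1
  have l1 := key_lower P (∑ l ∈ S₁ \ S₂, w l) k _ _ lam a hk hn1 hsplit1 hd1 hQ1.1 hPb.1 hc1
  have u2 := key_upper P (∑ l ∈ S₂ \ S₁, w l) k _ _ lam b hk hn2 hsplit2 hd2 hQ2.2 hPb.2 hc2
  have l2 := key_lower P (∑ l ∈ S₂ \ S₁, w l) k _ _ lam a hk hn2 hsplit2 hd2 hQ2.1 hPb.1 hc2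
  rw [inv_mul_eq_div, inv_mul_eq_div, hsum1, hsum2, abs_le]
  constructor <;> nlinarith [u1, l1, u2, l2]
end

section
/- Let X and Z be multisets of real numbers and let f ≥ 0 be an integer. Suppose there exists a multiset Y that is simultaneously a sub-multiset of Z and a sub-multiset of X, with |Z| − |Y| ≤ f. Then for every integer k ≥ 1 with f + k ≤ |Z| and k ≤ |X|, the (f + k)-th smallest element of Z is greater than or equal to the k-th smallest element of X. -/
/-!
Count the elements below a threshold `t`: the `m`-th smallest element of a multiset is `< t`
exactly when at least `m` of its elements are `< t`. If the `k`-th smallest element `t` of `X`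
exceeded the `(f + k)`-th smallest of `Z`, then `Z` would have at least `f + k` elements below `t`,
hence `Y` at least `k` (it misses at most `f` elements of `Z`), hence `X` at least `k`, which is
impossible since `t` itself is the `k`-th smallest of `X`.
-/

/-- The `m`-th smallest element (1-indexed, counted with multiplicity) of a
multiset of reals: the `m`-th entry of its nondecreasing enumeration. -/
noncomputable def kthSmallest (M : Multiset ℝ) (m : ℕ) : ℝ :=
  (M.sort (· ≤ ·)).getD (m - 1) 0

theorem List.SortedLE.getElem_lt_iff_lt_countP {α : Type*} [LinearOrder α] {l : List α}
    (hl : l.SortedLE) {i : ℕ} (hi : i < l.length) (t : α) :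
    l[i] < t ↔ i < l.countP (· < t) := by
  constructor
  · intro hit
    have htake : (l.take (i + 1)).countP (· < t) = i + 1 := by
      rw [List.countP_eq_length.mpr, List.length_take_of_le hi]
      intro a ha
      obtain ⟨j, hj, rfl⟩ := List.mem_iff_getElem.mp ha
      simp only [List.length_take] at hj
      simpa using (hl.getElem_le_getElem_of_le (by omega : j ≤ i)).trans_lt hit
    rw [← List.take_append_drop (i + 1) l, List.countP_append, htake]
    omega
  · intro hcount
    by_contra! hti
    have hdrop : (l.drop i).countP (· < t) = 0 := by
      rw [List.countP_eq_zero]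
      intro a ha
      obtain ⟨j, hj, rfl⟩ := List.mem_iff_getElem.mp ha
      simp only [List.length_drop] at hj
      simpa using hti.trans (hl.getElem_le_getElem_of_le (by omega : i ≤ i + j))
    have htake : (l.take i).countP (· < t) ≤ i :=
      List.countP_le_length.trans (List.length_take_le _ _)
    rw [← List.take_append_drop i l, List.countP_append, hdrop] at hcount
    omega

theorem kthSmallest_lt_iff {M : Multiset ℝ} {m : ℕ} (hm : 1 ≤ m) (hmM : m ≤ Multiset.card M)
    (t : ℝ) : kthSmallest M m < t ↔ m ≤ M.countP (· < t) := by
  have hi : m - 1 < (M.sort (· ≤ ·)).length := by rw [Multiset.length_sort]; omega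
  conv_rhs => rw [← Multiset.sort_eq M (· ≤ ·), Multiset.coe_countP]
  rw [kthSmallest, List.getD_eq_getElem _ _ hi,
    (Multiset.pairwise_sort M (· ≤ ·)).sortedLE.getElem_lt_iff_lt_countP hi]
  omega

theorem Multiset.countP_le_countP_add_card_sub_card {α : Type*} (p : α → Prop) [DecidablePred p]
    {Y Z : Multiset α} (h : Y ≤ Z) : Z.countP p ≤ Y.countP p + (card Z - card Y) := by
  obtain ⟨W, rfl⟩ := Multiset.le_iff_exists_add.mp h
  have := W.countP_le_card p
  rw [Multiset.countP_add, Multiset.card_add]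
  omega

theorem stmt_17 (X Z : Multiset ℝ) (f : ℕ)
    (hY : ∃ Y : Multiset ℝ, Y ≤ Z ∧ Y ≤ X ∧ Multiset.card Z - Multiset.card Y ≤ f) :
    ∀ k : ℕ, 1 ≤ k → f + k ≤ Multiset.card Z → k ≤ Multiset.card X →
      kthSmallest X k ≤ kthSmallest Z (f + k) := by
  obtain ⟨Y, hYZ, hYX, hcard⟩ := hY
  intro k hk hfk hkX
  by_contra! hlt
  set t := kthSmallest X k
  have hZ : f + k ≤ Z.countP (· < t) := (kthSmallest_lt_iff (by omega) hfk t).mp hlt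
  have hX : ¬ k ≤ X.countP (· < t) := fun h ↦ lt_irrefl t ((kthSmallest_lt_iff hk hkX t).mpr h)
  have hYcount : Y.countP (· < t) ≤ X.countP (· < t) := Multiset.countP_le_of_le _ hYX
  have hZY := Multiset.countP_le_countP_add_card_sub_card (· < t) hYZ
  omega
end

section
/- Let x = (x_1, …, x_h) be a family of vectors in ℝ^d and set Δ = Δ₂(x). Let q, f be integers with f ≥ 0, q > 2f, and q − 2f ≤ h. Let H ⊆ [h] with |H| = q − 2f, and let F = (w_1, …, w_f) be f vectors in ℝ^d such that the combined family ((x_j)_{j ∈ H}, w_1, …, w_f) of q − f vectors has ℓ2-diameter at most Δ. Let y be the average of this combined family, i.e. y = (1/(q − f)) (Σ_{j ∈ H} x_j + Σ_{m ∈ [f]} w_m), and let x̄ = (1/h) Σ_{j ∈ [h]} x_j. Then ‖y − x̄‖₂ ≤ [(2f + h − q) q + (q − 2f) f] / [h (q − f)] · Δ. -/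
/-- ℓ2-diameter of a family of vectors in ℝ^d: `Δ₂(x) = max_{j,k} ‖x j - x k‖₂`. -/
noncomputable def diam2 {d h : ℕ} (x : Fin h → EuclideanSpace ℝ (Fin d)) : ℝ :=
  ⨆ j : Fin h, ⨆ k : Fin h, ‖x j - x k‖

theorem stmt_18 {d h : ℕ} (hh : 1 ≤ h) (x : Fin h → EuclideanSpace ℝ (Fin d))
    (q f : ℕ) (hq : 2 * f < q) (hqh : q - 2 * f ≤ h)
    (H : Finset (Fin h)) (hH : H.card = q - 2 * f)
    (w : Fin f → EuclideanSpace ℝ (Fin d))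
    -- the combined family ((x_j)_{j ∈ H}, w_1, …, w_f) has ℓ2-diameter at most Δ₂(x):
    (hHH : ∀ j ∈ H, ∀ k ∈ H, ‖x j - x k‖ ≤ diam2 x)
    (hHw : ∀ j ∈ H, ∀ m : Fin f, ‖x j - w m‖ ≤ diam2 x)
    (hww : ∀ m m' : Fin f, ‖w m - w m'‖ ≤ diam2 x) :
    ‖((q : ℝ) - f)⁻¹ • (∑ j ∈ H, x j + ∑ m : Fin f, w m)
        - ((h : ℝ))⁻¹ • ∑ j : Fin h, x j‖ ≤
      ((2 * (f : ℝ) + h - q) * q + ((q : ℝ) - 2 * f) * f) /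
        ((h : ℝ) * ((q : ℝ) - f)) * diam2 x := by
  set Δ := diam2 x with hΔdef
  -- all pairwise distances in x are ≤ Δ
  have hxx : ∀ j k : Fin h, ‖x j - x k‖ ≤ Δ := by
    intro j k
    have h1 : ‖x j - x k‖ ≤ ⨆ k : Fin h, ‖x j - x k‖ :=
      le_ciSup (f := fun k => ‖x j - x k‖) (Set.Finite.bddAbove (Set.finite_range _)) k
    exact h1.trans (le_ciSup (f := fun j => ⨆ k : Fin h, ‖x j - x k‖)
      (Set.Finite.bddAbove (Set.finite_range _)) j)
  have hΔ0 : 0 ≤ Δ := by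
    have j0 : Fin h := ⟨0, hh⟩
    have := hxx j0 j0
    simpa using this
  -- H is nonempty
  have hHne : H.Nonempty := by
    rw [← Finset.card_pos, hH]; omega
  obtain ⟨j0, hj0⟩ := hHne
  -- bound for ‖w m - x k‖ for arbitrary k
  have hwx : ∀ m : Fin f, ∀ k : Fin h, ‖w m - x k‖ ≤ 2 * Δ := by
    intro m k
    have : w m - x k = -(x j0 - w m) + (x j0 - x k) := by abel
    rw [this]
    calc ‖-(x j0 - w m) + (x j0 - x k)‖ ≤ ‖-(x j0 - w m)‖ + ‖x j0 - x k‖ := norm_add_le _ _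
    _ = ‖x j0 - w m‖ + ‖x j0 - x k‖ := by rw [norm_neg]
    _ ≤ Δ + Δ := add_le_add (hHw j0 hj0 m) (hxx j0 k)
    _ = 2 * Δ := by ring
  have hwxH : ∀ m : Fin f, ∀ k ∈ H, ‖w m - x k‖ ≤ Δ := by
    intro m k hk
    rw [norm_sub_rev]; exact hHw k hk m
  -- notation
  set A := ∑ j ∈ H, x j with hA
  set B := ∑ m : Fin f, w m with hB
  set S := ∑ j : Fin h, x j with hS
  set T1 := ∑ j ∈ H, ∑ k : Fin h, (x j - x k) with hT1
  set T2 := ∑ m : Fin f, ∑ k : Fin h, (w m - x k) with hT2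
  have hrpos : (0:ℝ) < (h:ℝ) := by exact_mod_cast hh
  have hnpos : (0:ℝ) < (q:ℝ) - f := by
    have : (2*f : ℝ) < q := by exact_mod_cast hq
    have hf0 : (0:ℝ) ≤ f := by positivity
    linarith
  have hm : (H.card : ℝ) = (q:ℝ) - 2*f := by
    rw [hH, Nat.cast_sub (le_of_lt hq)]; push_cast; ring
  have hcard_le : H.card ≤ h := by
    simpa using H.card_le_univ.trans (by simp)
  have hcompl : ((Hᶜ.card : ℝ)) = (h:ℝ) - H.card := by
    rw [Finset.card_compl]
    rw [Nat.cast_sub (by simpa using hcard_le)]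
    simp
  -- inner sums
  have inner1 : ∀ j : Fin h, ∑ k : Fin h, (x j - x k) = (h:ℝ) • x j - S := by
    intro j
    rw [Finset.sum_sub_distrib, Finset.sum_const, Finset.card_univ, Fintype.card_fin]
    rw [Nat.cast_smul_eq_nsmul]
  have e1 : T1 = (h:ℝ) • A - (H.card : ℝ) • S := by
    rw [hT1]
    calc ∑ j ∈ H, ∑ k : Fin h, (x j - x k)
        = ∑ j ∈ H, ((h:ℝ) • x j - S) := Finset.sum_congr rfl (fun j _ => inner1 j)
      _ = (h:ℝ) • A - (H.card : ℝ) • S := by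
          rw [Finset.sum_sub_distrib, Finset.sum_const, ← Finset.smul_sum,
            Nat.cast_smul_eq_nsmul, Nat.cast_smul_eq_nsmul]
  have inner2 : ∀ m : Fin f, ∑ k : Fin h, (w m - x k) = (h:ℝ) • w m - S := by
    intro m
    rw [Finset.sum_sub_distrib, Finset.sum_const, Finset.card_univ, Fintype.card_fin]
    rw [Nat.cast_smul_eq_nsmul]
  have e2 : T2 = (h:ℝ) • B - (f : ℝ) • S := by
    rw [hT2]
    calc ∑ m : Fin f, ∑ k : Fin h, (w m - x k)
        = ∑ m : Fin f, ((h:ℝ) • w m - S) := Finset.sum_congr rfl (fun m _ => inner2 m)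
      _ = (h:ℝ) • B - (f : ℝ) • S := by
          rw [Finset.sum_sub_distrib, Finset.sum_const, ← Finset.smul_sum,
            Finset.card_univ, Fintype.card_fin, Nat.cast_smul_eq_nsmul,
            Nat.cast_smul_eq_nsmul]
  -- main vector identity
  have key : ((q : ℝ) - f)⁻¹ • (A + B) - ((h : ℝ))⁻¹ • S
      = (((q:ℝ) - f) * h)⁻¹ • (T1 + T2) := by
    rw [e1, e2, hm]
    match_scalars
    · field_simp
    · field_simp
    · field_simp
      ring
  -- bound on T1
  have zeroHH : ∑ j ∈ H, ∑ k ∈ H, (x j - x k) = 0 := by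
    have : ∑ j ∈ H, ∑ k ∈ H, (x j - x k)
        = ∑ j ∈ H, ((H.card : ℝ) • x j - A) := by
      refine Finset.sum_congr rfl (fun j _ => ?_)
      rw [Finset.sum_sub_distrib, Finset.sum_const, Nat.cast_smul_eq_nsmul]
    rw [this, Finset.sum_sub_distrib, Finset.sum_const, ← Finset.smul_sum,
      Nat.cast_smul_eq_nsmul, sub_self]
  have T1alt : T1 = ∑ j ∈ H, ∑ k ∈ Hᶜ, (x j - x k) := by
    rw [hT1]
    have : ∀ j : Fin h, ∑ k : Fin h, (x j - x k)
        = ∑ k ∈ H, (x j - x k) + ∑ k ∈ Hᶜ, (x j - x k) := by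
      intro j; rw [Finset.sum_add_sum_compl]
    rw [Finset.sum_congr rfl (fun j _ => this j), Finset.sum_add_distrib, zeroHH, zero_add]
  have b1 : ‖T1‖ ≤ (H.card : ℝ) * ((h:ℝ) - H.card) * Δ := by
    rw [T1alt]
    calc ‖∑ j ∈ H, ∑ k ∈ Hᶜ, (x j - x k)‖
        ≤ ∑ j ∈ H, ∑ k ∈ Hᶜ, ‖x j - x k‖ := by
          refine (norm_sum_le _ _).trans (Finset.sum_le_sum fun j _ => norm_sum_le _ _)
      _ ≤ ∑ j ∈ H, ∑ k ∈ Hᶜ, Δ :=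
          Finset.sum_le_sum fun j _ => Finset.sum_le_sum fun k _ => hxx j k
      _ = (H.card : ℝ) * ((h:ℝ) - H.card) * Δ := by
          simp [Finset.sum_const, nsmul_eq_mul, hcompl]; ring
  have b2 : ‖T2‖ ≤ (f:ℝ) * ((H.card : ℝ) * Δ + ((h:ℝ) - H.card) * (2*Δ)) := by
    rw [hT2]
    calc ‖∑ m : Fin f, ∑ k : Fin h, (w m - x k)‖
        ≤ ∑ m : Fin f, ∑ k : Fin h, ‖w m - x k‖ := by
          refine (norm_sum_le _ _).trans (Finset.sum_le_sum fun m _ => norm_sum_le _ _)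
      _ ≤ ∑ m : Fin f, ((H.card : ℝ) * Δ + ((h:ℝ) - H.card) * (2*Δ)) := by
          refine Finset.sum_le_sum fun m _ => ?_
          have : ∑ k : Fin h, ‖w m - x k‖
              = ∑ k ∈ H, ‖w m - x k‖ + ∑ k ∈ Hᶜ, ‖w m - x k‖ := by
            rw [Finset.sum_add_sum_compl]
          rw [this]
          have p1 : ∑ k ∈ H, ‖w m - x k‖ ≤ (H.card : ℝ) * Δ := by
            calc ∑ k ∈ H, ‖w m - x k‖ ≤ ∑ k ∈ H, Δ :=
                Finset.sum_le_sum fun k hk => hwxH m k hk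
              _ = (H.card : ℝ) * Δ := by simp [Finset.sum_const, nsmul_eq_mul]
          have p2 : ∑ k ∈ Hᶜ, ‖w m - x k‖ ≤ ((h:ℝ) - H.card) * (2*Δ) := by
            calc ∑ k ∈ Hᶜ, ‖w m - x k‖ ≤ ∑ k ∈ Hᶜ, 2*Δ :=
                Finset.sum_le_sum fun k _ => hwx m k
              _ = ((h:ℝ) - H.card) * (2*Δ) := by
                  simp [Finset.sum_const, nsmul_eq_mul, hcompl]
          linarith
      _ = (f:ℝ) * ((H.card : ℝ) * Δ + ((h:ℝ) - H.card) * (2*Δ)) := by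
          rw [Finset.sum_const, Finset.card_univ, Fintype.card_fin, nsmul_eq_mul]
  -- final assembly
  rw [key]
  rw [norm_smul]
  have habs : ‖(((q:ℝ) - f) * h)⁻¹‖ = (((q:ℝ) - f) * h)⁻¹ := by
    rw [Real.norm_eq_abs, abs_of_pos]; positivity
  rw [habs]
  have hb : ‖T1 + T2‖ ≤ (H.card : ℝ) * ((h:ℝ) - H.card) * Δ
      + (f:ℝ) * ((H.card : ℝ) * Δ + ((h:ℝ) - H.card) * (2*Δ)) :=
    (norm_add_le _ _).trans (add_le_add b1 b2)
  have hinv : (0:ℝ) ≤ (((q:ℝ) - f) * h)⁻¹ := by positivity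
  calc (((q:ℝ) - f) * h)⁻¹ * ‖T1 + T2‖
      ≤ (((q:ℝ) - f) * h)⁻¹ * ((H.card : ℝ) * ((h:ℝ) - H.card) * Δ
        + (f:ℝ) * ((H.card : ℝ) * Δ + ((h:ℝ) - H.card) * (2*Δ))) :=
        mul_le_mul_of_nonneg_left hb hinv
    _ = ((2 * (f : ℝ) + h - q) * q + ((q : ℝ) - 2 * f) * f) /
        ((h : ℝ) * ((q : ℝ) - f)) * Δ := by
        rw [hm]
        field_simp
        ring
end

section
/- Let x = (x_1, …, x_h) be a family of vectors in ℝ^d and set Δ = Δ₂(x). Let q, f be integers with f ≥ 0, q > 2f, q − 2f ≤ h, and 2(q − 2f) > h. For i ∈ {1, 2}, let H_i ⊆ [h] with |H_i| = q − 2f and let F_i = (w_{i,1}, …, w_{i,f}) be f vectors in ℝ^d such that the combined family S_i = ((x_j)_{j ∈ H_i}, w_{i,1}, …, w_{i,f}) of q − f vectors has ℓ2-diameter at most Δ. Let y_i = (1/(q − f)) (Σ_{j ∈ H_i} x_j + Σ_{m ∈ [f]} w_{i,m}) be the average of S_i. Then ‖y_1 − y_2‖₂ ≤ [(4f + h − q)/(q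 − f)] · Δ. -/
theorem stmt_19 {d h : ℕ} (hh : 1 ≤ h) (x : Fin h → EuclideanSpace ℝ (Fin d))
    (q f : ℕ) (hq : 2 * f < q) (hqh : q - 2 * f ≤ h) (hover : h < 2 * (q - 2 * f))
    (H : Fin 2 → Finset (Fin h)) (hH : ∀ i, (H i).card = q - 2 * f)
    (w : Fin 2 → Fin f → EuclideanSpace ℝ (Fin d))
    -- each combined family S_i = ((x_j)_{j ∈ H_i}, w_{i,1}, …, w_{i,f}) has
    -- ℓ2-diameter at most Δ₂(x):
    (hHH : ∀ i : Fin 2, ∀ j ∈ H i, ∀ k ∈ H i, ‖x j - x k‖ ≤ diam2 x)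
    (hHw : ∀ i : Fin 2, ∀ j ∈ H i, ∀ m : Fin f, ‖x j - w i m‖ ≤ diam2 x)
    (hww : ∀ i : Fin 2, ∀ m m' : Fin f, ‖w i m - w i m'‖ ≤ diam2 x) :
    ‖(((q : ℝ) - f)⁻¹ • (∑ j ∈ H 0, x j + ∑ m : Fin f, w 0 m))
        - (((q : ℝ) - f)⁻¹ • (∑ j ∈ H 1, x j + ∑ m : Fin f, w 1 m))‖ ≤
      (4 * (f : ℝ) + h - q) / ((q : ℝ) - f) * diam2 x := by
  set Δ := diam2 x with hΔdef
  have hle : ∀ j k : Fin h, ‖x j - x k‖ ≤ Δ := by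
    intro j k
    have hb1 : BddAbove (Set.range fun j : Fin h => ⨆ k : Fin h, ‖x j - x k‖) :=
      Set.Finite.bddAbove (Set.finite_range _)
    have hb2 : BddAbove (Set.range fun k : Fin h => ‖x j - x k‖) :=
      Set.Finite.bddAbove (Set.finite_range _)
    calc ‖x j - x k‖ ≤ ⨆ k : Fin h, ‖x j - x k‖ := le_ciSup hb2 k
      _ ≤ Δ := le_ciSup hb1 j
  have hΔ0 : 0 ≤ Δ := by
    have := hle ⟨0, hh⟩ ⟨0, hh⟩
    simpa using this
  have hH0 := hH 0
  have hH1 := hH 1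
  have hunion : (H 0 ∪ H 1).card ≤ h := by
    simpa using Finset.card_le_card ((H 0 ∪ H 1).subset_univ)
  have hui := Finset.card_union_add_card_inter (H 0) (H 1)
  have hinter : ((H 0) ∩ (H 1)).Nonempty := by
    rw [← Finset.card_pos]
    omega
  obtain ⟨j0, hj0⟩ := hinter
  have hj00 : j0 ∈ H 0 := (Finset.mem_inter.mp hj0).1
  have hj01 : j0 ∈ H 1 := (Finset.mem_inter.mp hj0).2
  set A := H 0 \ H 1 with hAdef
  set B := H 1 \ H 0 with hBdef
  have hcis0 := Finset.card_inter_add_card_sdiff (H 0) (H 1)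
  have hcis1 := Finset.card_inter_add_card_sdiff (H 1) (H 0)
  have hic : (H 1 ∩ H 0).card = (H 0 ∩ H 1).card := by rw [Finset.inter_comm]
  have hAc : A.card = (H 0 \ H 1).card := rfl
  have hBc : B.card = (H 1 \ H 0).card := rfl
  have hcardAB : A.card = B.card := by omega
  have hsleN : A.card + q ≤ h + 2 * f := by omega
  have hsle : (A.card : ℝ) ≤ (h : ℝ) + 2 * f - q := by
    have : ((A.card : ℝ)) + q ≤ (h : ℝ) + 2 * f := by exact_mod_cast hsleN
    linarith
  have hqf : (0:ℝ) < (q:ℝ) - f := by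
    have : (f:ℝ) < q := by exact_mod_cast (by omega : f < q)
    linarith
  have e : ↥A ≃ ↥B := Finset.equivOfCardEq hcardAB
  have hsumB : ∑ j ∈ B, x j = ∑ a : ↥A, x (e a) := by
    rw [← Finset.sum_coe_sort B (fun j => x j)]
    exact (Equiv.sum_comp e (fun b : ↥B => x (b : Fin h))).symm
  have hsumA : ∑ j ∈ A, x j = ∑ a : ↥A, x (a : Fin h) :=
    (Finset.sum_coe_sort A _).symm
  have hnormA : ‖∑ j ∈ A, x j - ∑ j ∈ B, x j‖ ≤ (A.card : ℝ) * Δ := by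
    rw [hsumA, hsumB, ← Finset.sum_sub_distrib]
    calc ‖∑ a : ↥A, (x (a : Fin h) - x (e a))‖
        ≤ ∑ a : ↥A, ‖x (a : Fin h) - x ((e a : Fin h))‖ := norm_sum_le _ _
      _ ≤ ∑ _a : ↥A, Δ := Finset.sum_le_sum (fun a _ => hle _ _)
      _ = (A.card : ℝ) * Δ := by
          rw [Finset.sum_const, nsmul_eq_mul]
          simp [Fintype.card_coe]
  have hnormW : ‖∑ m : Fin f, w 0 m - ∑ m : Fin f, w 1 m‖ ≤ 2 * (f : ℝ) * Δ := by
    rw [← Finset.sum_sub_distrib]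
    calc ‖∑ m : Fin f, (w 0 m - w 1 m)‖
        ≤ ∑ m : Fin f, ‖w 0 m - w 1 m‖ := norm_sum_le _ _
      _ ≤ ∑ _m : Fin f, 2 * Δ := by
          refine Finset.sum_le_sum fun m _ => ?_
          have h1 := hHw 0 j0 hj00 m
          have h2 := hHw 1 j0 hj01 m
          calc ‖w 0 m - w 1 m‖ = ‖(x j0 - w 1 m) - (x j0 - w 0 m)‖ := by
                congr 1; abel
            _ ≤ ‖x j0 - w 1 m‖ + ‖x j0 - w 0 m‖ := norm_sub_le _ _
            _ ≤ 2 * Δ := by linarith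
      _ = 2 * (f : ℝ) * Δ := by
          rw [Finset.sum_const, nsmul_eq_mul]
          simp; ring
  have key : (∑ j ∈ H 0, x j + ∑ m : Fin f, w 0 m) - (∑ j ∈ H 1, x j + ∑ m : Fin f, w 1 m)
      = (∑ j ∈ A, x j - ∑ j ∈ B, x j) + (∑ m : Fin f, w 0 m - ∑ m : Fin f, w 1 m) := by
    have h0 := Finset.sum_inter_add_sum_sdiff (H 0) (H 1) x
    have h1 := Finset.sum_inter_add_sum_sdiff (H 1) (H 0) x
    have h2 : (H 1 ∩ H 0) = (H 0 ∩ H 1) := Finset.inter_comm _ _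
    rw [h2] at h1
    rw [← h0, ← h1]
    abel
  rw [← smul_sub, key, norm_smul]
  have hD : ‖(∑ j ∈ A, x j - ∑ j ∈ B, x j) + (∑ m : Fin f, w 0 m - ∑ m : Fin f, w 1 m)‖
      ≤ (4 * (f : ℝ) + h - q) * Δ := by
    calc ‖(∑ j ∈ A, x j - ∑ j ∈ B, x j) + (∑ m : Fin f, w 0 m - ∑ m : Fin f, w 1 m)‖
        ≤ ‖∑ j ∈ A, x j - ∑ j ∈ B, x j‖ + ‖∑ m : Fin f, w 0 m - ∑ m : Fin f, w 1 m‖ :=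
          norm_add_le _ _
      _ ≤ (A.card : ℝ) * Δ + 2 * (f : ℝ) * Δ := add_le_add hnormA hnormW
      _ ≤ (4 * (f : ℝ) + h - q) * Δ := by nlinarith [mul_le_mul_of_nonneg_right hsle hΔ0]
  have hnorminv : ‖((q : ℝ) - f)⁻¹‖ = ((q : ℝ) - f)⁻¹ := by
    rw [Real.norm_eq_abs, abs_inv, abs_of_pos hqf]
  rw [hnorminv, div_eq_inv_mul, mul_assoc]
  exact mul_le_mul_of_nonneg_left hD (inv_nonneg.mpr hqf.le)
end
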